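/- arXiv:2604.04848 — 2 statements merged into one kernel-verified Lean document; each statement's English description precedes it below -/
import Mathlib

section
/- For all integers r ≥ 2, k with 1 ≤ k ≤ r−1, and n with 0 ≤ n ≤ r−1−k, the identity Σ_{m=0}^{r−1−k} C(m+k, k) C(r+1, m+k+2) (−1)^{m−n} C(m−1, n) = C(k+n+2, k+2) · ( r(k+2) − k(k+n+2) − n ) / (k+n+2) holds, with the convention C(−1, n) = (−1)^n. -/
/-!
Write `S_j(r) = ∑ₘ C(m+k, k) C(r+1, m+k+j) (-1)^(m+n) C(m-1, n)`, so the left-hand side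
is `S_2(r)`.
Pascal's rule gives `S_{j+1}(r+1) = S_j(r) + S_{j+1}(r)`. For `r ≥ k + n`, trinomial revision
turns `S_0(r)` into a multiple of `∑ₘ (-1)^m C(N, m) C(m-1, n)` with `N = r + 1 - k > n`, an
`N`-th finite difference of a polynomial of degree `n`, hence `S_0(r) = 0`. At the smallest
admissible `r` only the term `m = 0` survives in `S_1` and `S_2`; so `S_1` is the constant
`C(k+n+1, k+1)`, and `S_2` grows linearly in `r` with that slope, which is the closed form.
-/

/-- Generalized binomial coefficient `C(m-1, n)` with the convention `C(-1, n) = (-1)^n`. -/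
def gchooseM1 (m n : ℕ) : ℚ := if m = 0 then (-1) ^ n else ((m - 1).choose n : ℚ)

open Finset

theorem sum_range_neg_one_pow_mul_choose_mul_choose {R : Type*} [CommRing R] {N t : ℕ}
    (h : t < N) : ∑ j ∈ range (N + 1), (-1 : R) ^ j * N.choose j * j.choose t = 0 := by
  have key := fwdDiff_iter_choose_zero t N
  rw [fwdDiff_iter_eq_sum_shift, if_neg h.ne'] at key
  simp only [zero_add, smul_eq_mul, mul_one] at key
  have hZ : ∑ j ∈ range (N + 1), (-1 : ℤ) ^ j * N.choose j * j.choose t = 0 := by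
    rw [← mul_right_inj' (pow_ne_zero N (neg_ne_zero.mpr one_ne_zero) : (-1 : ℤ) ^ N ≠ 0),
      mul_zero, ← key, mul_sum]
    refine sum_congr rfl fun j hj => ?_
    have hsq : (-1 : ℤ) ^ j * (-1) ^ j = 1 := by rw [← mul_pow]; simp
    rw [← pow_sub_mul_pow (-1 : ℤ) (mem_range_succ_iff.mp hj)]
    linear_combination ((-1 : ℤ) ^ (N - j) * N.choose j * j.choose t) * hsq
  exact_mod_cast congrArg (Int.cast : ℤ → R) hZ

theorem gchooseM1_zero_left (n : ℕ) : gchooseM1 0 n = (-1) ^ n := if_pos rfl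

theorem gchooseM1_zero_right (m : ℕ) : gchooseM1 m 0 = 1 := by
  unfold gchooseM1; split_ifs <;> simp

theorem gchooseM1_eq_zero {m n : ℕ} (h0 : m ≠ 0) (h : m ≤ n) : gchooseM1 m n = 0 := by
  rw [gchooseM1, if_neg h0, Nat.choose_eq_zero_of_lt (by omega), Nat.cast_zero]

theorem gchooseM1_succ_right (m n : ℕ) :
    gchooseM1 m (n + 1) = m.choose (n + 1) - gchooseM1 m n := by
  cases m with
  | zero => simp [gchooseM1_zero_left, pow_succ]
  | succ m => simp [gchooseM1, Nat.choose_succ_succ']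

theorem sum_range_neg_one_pow_mul_choose_mul_gchooseM1 {N n : ℕ} (h : n < N) :
    ∑ m ∈ range (N + 1), (-1 : ℚ) ^ m * N.choose m * gchooseM1 m n = 0 := by
  induction n with
  | zero =>
    simpa [gchooseM1_zero_right] using
      sum_range_neg_one_pow_mul_choose_mul_choose (R := ℚ) (t := 0) h
  | succ n ih =>
    simp only [gchooseM1_succ_right, mul_sub, sum_sub_distrib,
      sum_range_neg_one_pow_mul_choose_mul_choose h, ih (by omega), sub_zero]

/-- `binomSum k n j r` is `S_j(r)`; the range `r + 2` contains every `m` with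
`m + k + j ≤ r + 1`. -/
def binomSum (k n j r : ℕ) : ℚ :=
  ∑ m ∈ range (r + 2), ((m + k).choose k : ℚ) * ((r + 1).choose (m + k + j) : ℚ) *
    (-1 : ℚ) ^ (m + n) * gchooseM1 m n

theorem binomSum_eq_sum_range {k n j r N : ℕ} (hN : r + 2 ≤ N + k + j) :
    binomSum k n j r = ∑ m ∈ range N, ((m + k).choose k : ℚ) *
      ((r + 1).choose (m + k + j) : ℚ) * (-1 : ℚ) ^ (m + n) * gchooseM1 m n := by
  have hvanish : ∀ m ≥ r + 2 - (k + j), ((m + k).choose k : ℚ) *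
      ((r + 1).choose (m + k + j) : ℚ) * (-1 : ℚ) ^ (m + n) * gchooseM1 m n = 0 := by
    intro m hm
    rw [Nat.choose_eq_zero_of_lt (by omega : r + 1 < m + k + j)]
    simp
  rw [binomSum, eventually_constant_sum hvanish (by omega),
    eventually_constant_sum hvanish (by omega : r + 2 - (k + j) ≤ N)]

theorem binomSum_succ (k n j r : ℕ) :
    binomSum k n (j + 1) (r + 1) = binomSum k n j r + binomSum k n (j + 1) r := by
  rw [binomSum_eq_sum_range (r := r) (j := j) (N := r + 3) (by omega),
    binomSum_eq_sum_range (r := r) (j := j + 1) (N := r + 3) (by omega), binomSum,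
    ← sum_add_distrib]
  refine sum_congr rfl fun m _ => ?_
  rw [← add_assoc, Nat.choose_succ_succ']
  push_cast
  ring

theorem binomSum_zero {k n r : ℕ} (h : k + n ≤ r) : binomSum k n 0 r = 0 := by
  have hsum := sum_range_neg_one_pow_mul_choose_mul_gchooseM1 (N := r + 1 - k) (n := n) (by omega)
  rw [binomSum_eq_sum_range (N := r + 1 - k + 1) (by omega)]
  calc _ = (-1) ^ n * ((r + 1).choose k : ℚ) * ∑ m ∈ range (r + 1 - k + 1),
        (-1 : ℚ) ^ m * (r + 1 - k).choose m * gchooseM1 m n := by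
        rw [mul_sum]
        refine sum_congr rfl fun m _ => ?_
        have hrev := Nat.choose_mul (n := r + 1) (k := m + k) (Nat.le_add_left k m)
        rw [Nat.add_sub_cancel] at hrev
        have hrevQ : ((r + 1).choose (m + k) : ℚ) * (m + k).choose k =
            (r + 1).choose k * (r + 1 - k).choose m := by exact_mod_cast hrev
        rw [add_zero, pow_add]
        linear_combination ((-1 : ℚ) ^ m * (-1) ^ n * gchooseM1 m n) * hrevQ
    _ = 0 := by rw [hsum, mul_zero]

theorem binomSum_base (k n j : ℕ) :
    binomSum k n (j + 1) (k + n + j) = (k + n + j + 1).choose (k + j + 1) := by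
  rw [binomSum, sum_eq_single 0]
  · rw [gchooseM1_zero_left, zero_add, zero_add, Nat.choose_self, mul_assoc, ← pow_add,
      ← two_mul, pow_mul, neg_one_sq, one_pow, ← add_assoc]
    simp
  · intro m _ hm0
    rcases le_or_gt m n with hmn | hnm
    · rw [gchooseM1_eq_zero hm0 hmn, mul_zero]
    · rw [Nat.choose_eq_zero_of_lt (by omega : k + n + j + 1 < m + k + (j + 1))]
      simp
  · simp

theorem binomSum_one {k n r : ℕ} (h : k + n ≤ r) :
    binomSum k n 1 r = (k + n + 1).choose (k + 1) := by
  induction r, h using Nat.le_induction with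
  | base => simpa using binomSum_base k n 0
  | succ r hr ih => rw [binomSum_succ, binomSum_zero hr, ih, zero_add]

theorem binomSum_two (k n i : ℕ) :
    binomSum k n 2 (k + n + 1 + i) =
      (k + n + 2).choose (k + 2) + i * (k + n + 1).choose (k + 1) := by
  induction i with
  | zero => simpa using binomSum_base k n 1
  | succ i ih =>
    rw [← add_assoc, binomSum_succ, ih, binomSum_one (by omega)]
    push_cast
    ring

theorem sum_identity_two_general (r k n : ℕ) (hr : 2 ≤ r) (hk : k ≤ r - 1)
    (hn : n ≤ r - 1 - k) :
    (∑ m ∈ Finset.range (r - k), ((m + k).choose k : ℚ) * ((r + 1).choose (m + k + 2) : ℚ) *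
        (-1 : ℚ) ^ (m + n) * gchooseM1 m n) =
      ((k + n + 2).choose (k + 2) : ℚ) *
        ((r : ℚ) * (k + 2) - k * ((k : ℚ) + n + 2) - n) / ((k : ℚ) + n + 2) := by
  obtain ⟨i, rfl⟩ : ∃ i, r = k + n + 1 + i := ⟨r - (k + n + 1), by omega⟩
  have hpascal : ((k + n + 2).choose (k + 2) : ℚ) * (k + 2) =
      (k + n + 2) * (k + n + 1).choose (k + 1) := by
    exact_mod_cast (Nat.add_one_mul_choose_eq (k + n + 1) (k + 1)).symm
  rw [← binomSum_eq_sum_range (by omega), binomSum_two, eq_div_iff (by positivity)]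
  push_cast
  linear_combination (-i : ℚ) * hpascal

theorem sum_identity_two (r k n : ℕ) (hr : 2 ≤ r) (hk1 : 1 ≤ k) (hk : k ≤ r - 1)
    (hn : n ≤ r - 1 - k) :
    (∑ m ∈ Finset.range (r - k), ((m + k).choose k : ℚ) * ((r + 1).choose (m + k + 2) : ℚ) *
        (-1 : ℚ) ^ (m + n) * gchooseM1 m n) =
      ((k + n + 2).choose (k + 2) : ℚ) *
        ((r : ℚ) * (k + 2) - k * ((k : ℚ) + n + 2) - n) / ((k : ℚ) + n + 2) :=
  sum_identity_two_general r k n hr hk hn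
end

section
/- For integers r ≥ 4, 1 ≤ k ≤ r−3, and r ≤ n ≤ 2r−3−k, the coefficient c̃_g(r,k,n) := C(r, k+1)·((2r−k)(k+1) − (n+1)(k+2))/(k+2) + C(k+(n−r)+1, k+1)·((2r−k)(k+1) − (n+1)k)/(k+2) is strictly positive. -/
/-!
Write `r = k + u + 3` and `n = r + m`, so that `0 ≤ m ≤ u`, and let `F m` be `k + 2` times the
coefficient. Its differences `E m = F m - F (m + 1)` satisfy
`(k + m + 2) E m = (m + 2) E (m + 1) + k (k + 2) (C(r, k+1) - C(k+m+2, k+1))`,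
so `E m` dominates a weighted average of `E (m + 1)` and `0`. One step past the range, `F (u + 1) = 0`,
while `(u + 1) (u + 2) F u = k (k + 1) (k + 2) C(k+u+1, k+1) > 0`; thus `E u = F u > 0`, every `E m` with
`m ≤ u` is positive, and `F` decreases strictly on `[0, u + 1]` down to its root `u + 1`.
-/

/-- `k + 2` times the coefficient `c̃_g(r, k, r + m)`. -/
def ctildeNumer (r k m : ℕ) : ℚ :=
  (r.choose (k + 1) : ℚ) * ((2 * r - k) * (k + 1) - (r + m + 1) * (k + 2)) +
    ((k + m + 1).choose (k + 1) : ℚ) * ((2 * r - k) * (k + 1) - (r + m + 1) * k)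

lemma choose_succ_mul_succ (k j : ℕ) :
    ((k + j + 2).choose (k + 1) : ℚ) * (j + 1) = (k + j + 2) * (k + j + 1).choose (k + 1) := by
  have h := Nat.choose_mul_succ_eq (k + j + 1) (k + 1)
  rw [show k + j + 1 + 1 - (k + 1) = j + 1 by omega] at h
  rw [mul_comm _ ((k + j + 1).choose (k + 1) : ℚ)]
  exact_mod_cast h.symm

namespace ctildeNumer

lemma sub_succ_recurrence (r k m : ℕ) :
    (ctildeNumer r k m - ctildeNumer r k (m + 1)) * (k + m + 2) =
      (m + 2) * (ctildeNumer r k (m + 1) - ctildeNumer r k (m + 2)) +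
        k * (k + 2) * ((r.choose (k + 1) : ℚ) - (k + m + 2).choose (k + 1)) := by
  have h₁ := choose_succ_mul_succ k m
  have h₂ := choose_succ_mul_succ k (m + 1)
  simp only [ctildeNumer]
  push_cast [show k + (m + 1) + 2 = k + m + 3 by omega, show k + (m + 1) + 1 = k + m + 2 by omega,
    show k + (m + 2) + 1 = k + m + 3 by omega] at h₁ h₂ ⊢
  linear_combination (-((2 * (r : ℚ) - k) * (k + 1) - (r + m + 1) * k)) * h₁ +
    ((2 * (r : ℚ) - k) * (k + 1) - (r + m + 3) * k) * h₂

lemma top_add_one_eq_zero (k u : ℕ) : ctildeNumer (k + u + 3) k (u + 1) = 0 := by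
  have h := choose_succ_mul_succ k (u + 1)
  simp only [ctildeNumer]
  push_cast [show k + (u + 1) + 2 = k + u + 3 by omega, show k + (u + 1) + 1 = k + u + 2 by omega]
    at h ⊢
  linear_combination (-2) * h

lemma top_mul_eq (k u : ℕ) :
    ctildeNumer (k + u + 3) k u * ((u + 1) * (u + 2)) =
      k * (k + 1) * (k + 2) * (k + u + 1).choose (k + 1) := by
  have h₁ := choose_succ_mul_succ k u
  have h₂ := choose_succ_mul_succ k (u + 1)
  simp only [ctildeNumer]
  push_cast [show k + (u + 1) + 2 = k + u + 3 by omega, show k + (u + 1) + 1 = k + u + 2 by omega]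
    at h₁ h₂ ⊢
  linear_combination ((k : ℚ) - 2 * u - 2) * ((u + 1) * h₂ + (k + u + 3) * h₁)

lemma top_pos {k : ℕ} (hk : 1 ≤ k) (u : ℕ) : 0 < ctildeNumer (k + u + 3) k u := by
  have hchoose : 0 < (k + u + 1).choose (k + 1) := Nat.choose_pos (by omega)
  have hk' : (0 : ℚ) < k := by exact_mod_cast hk
  have h : 0 < ctildeNumer (k + u + 3) k u * ((u + 1) * (u + 2)) := by
    rw [top_mul_eq]
    positivity
  exact (mul_pos_iff_of_pos_right (by positivity)).mp h

lemma sub_succ_pos {k : ℕ} (hk : 1 ≤ k) {u m : ℕ} (hm : m ≤ u) :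
    0 < ctildeNumer (k + u + 3) k m - ctildeNumer (k + u + 3) k (m + 1) := by
  induction hm using Nat.decreasingInduction with
  | self => simpa [top_add_one_eq_zero] using top_pos hk u
  | of_succ j hj ih =>
    have hchoose : ((k + j + 2).choose (k + 1) : ℚ) ≤ (k + u + 3).choose (k + 1) := by
      exact_mod_cast Nat.choose_le_choose _ (by omega)
    have hcorr : (0 : ℚ) ≤
        k * (k + 2) * (((k + u + 3).choose (k + 1) : ℚ) - (k + j + 2).choose (k + 1)) :=
      mul_nonneg (by positivity) (sub_nonneg.mpr hchoose)
    have h : 0 < (ctildeNumer (k + u + 3) k j - ctildeNumer (k + u + 3) k (j + 1)) * (k + j + 2) := by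
      rw [sub_succ_recurrence]
      exact add_pos_of_pos_of_nonneg (mul_pos (by positivity) ih) hcorr
    exact (mul_pos_iff_of_pos_right (by positivity)).mp h

lemma pos {k : ℕ} (hk : 1 ≤ k) {u m : ℕ} (hm : m ≤ u) : 0 < ctildeNumer (k + u + 3) k m := by
  induction hm using Nat.decreasingInduction with
  | self => exact top_pos hk u
  | of_succ j hj ih => linarith [sub_succ_pos hk hj.le]

end ctildeNumer

theorem ctilde_pos_general (r k n : ℕ) (hk1 : 1 ≤ k) (hk : k ≤ r - 3)
    (hn1 : r ≤ n) (hn : n ≤ 2 * r - 3 - k) :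
    0 < (r.choose (k + 1) : ℚ) *
          ((2 * (r : ℚ) - k) * ((k : ℚ) + 1) - ((n : ℚ) + 1) * ((k : ℚ) + 2)) / ((k : ℚ) + 2) +
        ((k + (n - r) + 1).choose (k + 1) : ℚ) *
          ((2 * (r : ℚ) - k) * ((k : ℚ) + 1) - ((n : ℚ) + 1) * k) / ((k : ℚ) + 2) := by
  obtain ⟨u, rfl⟩ : ∃ u, r = k + u + 3 := ⟨r - k - 3, by omega⟩
  obtain ⟨m, rfl⟩ : ∃ m, n = k + u + 3 + m := ⟨n - (k + u + 3), by omega⟩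
  rw [Nat.add_sub_cancel_left, ← add_div]
  refine div_pos ((ctildeNumer.pos hk1 (show m ≤ u by omega)).trans_eq ?_) (by positivity)
  simp only [ctildeNumer]
  push_cast
  ring

theorem ctilde_pos (r k n : ℕ) (hr : 4 ≤ r) (hk1 : 1 ≤ k) (hk : k ≤ r - 3)
    (hn1 : r ≤ n) (hn : n ≤ 2 * r - 3 - k) :
    0 < (r.choose (k + 1) : ℚ) *
          ((2 * (r : ℚ) - k) * ((k : ℚ) + 1) - ((n : ℚ) + 1) * ((k : ℚ) + 2)) / ((k : ℚ) + 2) +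
        ((k + (n - r) + 1).choose (k + 1) : ℚ) *
          ((2 * (r : ℚ) - k) * ((k : ℚ) + 1) - ((n : ℚ) + 1) * k) / ((k : ℚ) + 2) :=
  ctilde_pos_general r k n hk1 hk hn1 hn
end
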